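/- arXiv:2503.19547 — 3 statements merged into one kernel-verified Lean document; each statement's English description precedes it below -/
import Mathlib

section
/- Takagi factorization: every complex symmetric matrix A of size M×M can be factored as A = Q Σ Qᵀ, where Q is unitary and Σ is a diagonal matrix with nonnegative real entries equal to the singular values of A. -/
open Matrix Polynomial Module

local notation "⟪" x ", " y "⟫" => @inner ℂ _ _ x y


lemma exists_comp_perm {α : Type*} : ∀ {n : ℕ} (f g : Fin n → α),
    Multiset.map f Finset.univ.val = Multiset.map g Finset.univ.val →
    ∃ σ : Equiv.Perm (Fin n), ∀ i, f i = g (σ i) := by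
  intro n
  induction n with
  | zero => exact fun f g _ => ⟨1, fun i => i.elim0⟩
  | succ n ih =>
    intro f g h
    have huniv : (Finset.univ : Finset (Fin (n+1))).val
        = 0 ::ₘ Multiset.map Fin.succ Finset.univ.val := by
      rw [Fin.univ_succ, Finset.cons_val, Finset.map_val]
      rfl
    have h0 : f 0 ∈ Multiset.map g Finset.univ.val := by
      rw [← h]
      exact Multiset.mem_map_of_mem _ (Finset.mem_univ_val _)
    obtain ⟨j, -, hj⟩ := Multiset.mem_map.mp h0
    set g₁ : Fin (n+1) → α := g ∘ (Equiv.swap 0 j) with hg₁def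
    have hg₁0 : g₁ 0 = f 0 := by simp [hg₁def, hj]
    have hmapeq : Multiset.map g₁ Finset.univ.val = Multiset.map g Finset.univ.val := by
      have he : Multiset.map (⇑(Equiv.swap 0 j)) Finset.univ.val
          = (Finset.univ : Finset (Fin (n+1))).val := by
        have := congrArg Finset.val (Finset.map_univ_equiv (Equiv.swap 0 j))
        rw [Finset.map_val] at this
        exact this
      calc Multiset.map g₁ Finset.univ.val
          = Multiset.map g (Multiset.map (⇑(Equiv.swap 0 j)) Finset.univ.val) := by
            rw [Multiset.map_map]
        _ = Multiset.map g Finset.univ.val := by rw [he]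
    have h' : Multiset.map (f ∘ Fin.succ) Finset.univ.val
        = Multiset.map (g₁ ∘ Fin.succ) Finset.univ.val := by
      have h2 : f 0 ::ₘ Multiset.map (f ∘ Fin.succ) Finset.univ.val
          = f 0 ::ₘ Multiset.map (g₁ ∘ Fin.succ) Finset.univ.val := by
        calc f 0 ::ₘ Multiset.map (f ∘ Fin.succ) Finset.univ.val
            = Multiset.map f ((Finset.univ : Finset (Fin (n+1))).val) := by
              rw [huniv, Multiset.map_cons, Multiset.map_map]
          _ = Multiset.map g₁ ((Finset.univ : Finset (Fin (n+1))).val) := by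
              rw [h, hmapeq]
          _ = g₁ 0 ::ₘ Multiset.map (g₁ ∘ Fin.succ) Finset.univ.val := by
              rw [huniv, Multiset.map_cons, Multiset.map_map]
          _ = f 0 ::ₘ Multiset.map (g₁ ∘ Fin.succ) Finset.univ.val := by rw [hg₁0]
      exact (Multiset.cons_inj_right _).mp h2
    obtain ⟨σ', hσ'⟩ := ih (f ∘ Fin.succ) (g₁ ∘ Fin.succ) h'
    refine ⟨(Equiv.Perm.decomposeFin.symm (0, σ')).trans (Equiv.swap 0 j), fun i => ?_⟩
    refine Fin.cases ?_ (fun i => ?_) i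
    · simp [hj.symm]
    · have := hσ' i
      simp only [Function.comp] at this
      simp [Equiv.Perm.decomposeFin_symm_apply_succ, this, hg₁def]


variable {n : Type*} [DecidableEq n] [Fintype n]

lemma charpoly_similar (P Pi B : Matrix n n ℂ) (hP : P * Pi = 1) :
    (P * B * Pi).charpoly = B.charpoly := by
  have hmap : ∀ (M N : Matrix n n ℂ), (M * N).map (C : ℂ →+* ℂ[X])
      = M.map (C : ℂ →+* ℂ[X]) * N.map (C : ℂ →+* ℂ[X]) := fun M N => Matrix.map_mul
  have hone : (1 : Matrix n n ℂ).map (C : ℂ →+* ℂ[X]) = 1 := Matrix.map_one _ (map_zero _) (map_one _)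
  have key : P.map (C : ℂ →+* ℂ[X]) * charmatrix B * Pi.map (C : ℂ →+* ℂ[X])
      = charmatrix (P * B * Pi) := by
    rw [charmatrix, charmatrix, RingHom.mapMatrix_apply, RingHom.mapMatrix_apply,
      Matrix.mul_sub, Matrix.sub_mul]
    congr 1
    · rw [← (Matrix.scalar_commute (X : ℂ[X]) (fun r' => Commute.all _ _)
        (P.map (C : ℂ →+* ℂ[X]))).eq, Matrix.mul_assoc, ← hmap, hP, hone, Matrix.mul_one]
    · rw [← hmap, ← hmap, Matrix.mul_assoc]
  rw [Matrix.charpoly, ← key, det_mul, det_mul, Matrix.charpoly]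
  have h1 : (P.map (C : ℂ →+* ℂ[X])).det * (Pi.map (C : ℂ →+* ℂ[X])).det = 1 := by
    rw [← det_mul, ← hmap, hP, hone, det_one]
  calc (P.map (C : ℂ →+* ℂ[X])).det * (charmatrix B).det * (Pi.map (C : ℂ →+* ℂ[X])).det
      = (charmatrix B).det * ((P.map (C : ℂ →+* ℂ[X])).det * (Pi.map (C : ℂ →+* ℂ[X])).det) := by
        ring
    _ = (charmatrix B).det := by rw [h1, mul_one]

lemma charpoly_diagonal (d : n → ℂ) :
    (Matrix.diagonal d).charpoly = ∏ i, (X - C (d i)) := by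
  rw [Matrix.charpoly]
  have : charmatrix (Matrix.diagonal d) = Matrix.diagonal fun i => X - C (d i) := by
    refine Matrix.ext fun i j => ?_
    by_cases h : i = j
    · subst h; simp [charmatrix_apply_eq]
    · rw [charmatrix_apply_ne _ _ _ h, Matrix.diagonal_apply_ne _ h, Matrix.diagonal_apply_ne _ h]
      simp
  rw [this, Matrix.det_diagonal]



lemma antilinear_diag : ∀ (n : ℕ) (E : Type) [NormedAddCommGroup E]
    [InnerProductSpace ℂ E] [FiniteDimensional ℂ E], finrank ℂ E = n →
    ∀ T : E → E,
    (∀ x y : E, T (x + y) = T x + T y) →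
    (∀ (c : ℂ) (x : E), T (c • x) = (starRingEnd ℂ c) • T x) →
    (∀ x y : E, ⟪T x, y⟫ = ⟪T y, x⟫) →
    ∃ (v : Fin n → E) (d : Fin n → ℝ), Orthonormal ℂ v ∧ (∀ i, 0 ≤ d i) ∧
      ∀ i, T (v i) = (d i : ℂ) • v i := by
  intro n
  induction n with
  | zero =>
    intro E _ _ _ _ T _ _ _
    exact ⟨fun i => i.elim0, fun i => i.elim0, by
      rw [orthonormal_iff_ite]; exact fun i => i.elim0, fun i => i.elim0, fun i => i.elim0⟩
  | succ n ih =>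
    intro E _ _ _ hrank T hadd hsmul hsym
    have : Nontrivial E := Module.nontrivial_of_finrank_pos
      (R := ℂ) (by rw [hrank]; omega)
    let S : E →ₗ[ℂ] E :=
      { toFun := fun x => T (T x)
        map_add' := fun x y => by
          show T (T (x + y)) = T (T x) + T (T y)
          rw [hadd, hadd]
        map_smul' := fun c x => by
          show T (T (c • x)) = c • T (T x)
          rw [hsmul, hsmul, Complex.conj_conj] }
    obtain ⟨μ, hμ⟩ := Module.End.exists_eigenvalue S
    obtain ⟨x, hx⟩ := hμ.exists_hasEigenvector
    have hx0 : x ≠ 0 := hx.right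
    have hSx : T (T x) = μ • x := hx.apply_eq_smul
    have hxnorm : (0:ℝ) < ‖x‖ := norm_pos_iff.mpr hx0
    -- μ = s ^ 2 where s = ‖T x‖ / ‖x‖
    set s : ℝ := ‖T x‖ / ‖x‖ with hsdef
    have hs0 : 0 ≤ s := div_nonneg (norm_nonneg _) (norm_nonneg _)
    have e1 : ⟪x, T (T x)⟫ = μ * (‖x‖ : ℂ) ^ 2 := by
      rw [hSx, inner_smul_right, inner_self_eq_norm_sq_to_K]
      norm_cast
    have e2 : ⟪x, T (T x)⟫ = (‖T x‖ : ℂ) ^ 2 := by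
      rw [← inner_conj_symm, hsym (T x) x, inner_self_eq_norm_sq_to_K]
      simp [← Complex.ofReal_pow]
    have hμs : μ = ((s : ℝ) : ℂ) ^ 2 := by
      have hxne : ((‖x‖ : ℂ)) ^ 2 ≠ 0 := pow_ne_zero _ (by
        simpa using hxnorm.ne')
      have e3 : ((s : ℝ) : ℂ) ^ 2 * (‖x‖ : ℂ) ^ 2 = (‖T x‖ : ℂ) ^ 2 := by
        rw [hsdef]
        push_cast
        field_simp
        exact mul_div_cancel_right₀ _ (by exact_mod_cast hxnorm.ne')
      apply mul_right_cancel₀ hxne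
      rw [← e1, e2, e3]
    -- find a unit vector u with T u = s • u
    obtain ⟨u, hu, hTu⟩ : ∃ u : E, ‖u‖ = 1 ∧ T u = ((s : ℝ) : ℂ) • u := by
      by_cases hw : T x + ((s : ℝ) : ℂ) • x = 0
      · -- T x = -(s • x); take u = (‖x‖⁻¹ * I) • x
        have hTx : T x = (-((s : ℝ) : ℂ)) • x := by
          rw [neg_smul, eq_neg_iff_add_eq_zero]; exact hw
        refine ⟨((((‖x‖⁻¹ : ℝ)) : ℂ) * Complex.I) • x, ?_, ?_⟩
        · rw [norm_smul]
          simp [abs_of_nonneg (inv_nonneg.mpr hxnorm.le), inv_mul_cancel₀ hxnorm.ne']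
        · rw [hsmul, hTx, smul_smul, smul_smul]
          congr 1
          simp only [_root_.map_mul, Complex.conj_ofReal, Complex.conj_I]
          ring
      · -- take u = ‖w‖⁻¹ • w  where  w = T x + s • x
        set w : E := T x + ((s : ℝ) : ℂ) • x with hwdef
        have hwnorm : (0:ℝ) < ‖w‖ := norm_pos_iff.mpr hw
        have hTw : T w = ((s : ℝ) : ℂ) • w := by
          rw [hwdef, hadd, hsmul, hSx, hμs, Complex.conj_ofReal, smul_add, smul_smul,
            pow_two, add_comm]
        refine ⟨(((‖w‖⁻¹ : ℝ)) : ℂ) • w, ?_, ?_⟩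
        · rw [norm_smul]
          simp [abs_of_nonneg (inv_nonneg.mpr hwnorm.le), inv_mul_cancel₀ hwnorm.ne']
        · rw [hsmul, hTw, smul_smul, smul_smul]
          congr 1
          simp only [Complex.conj_ofReal]
          ring
    have hu0 : u ≠ 0 := by intro h; rw [h, norm_zero] at hu; norm_num at hu
    -- the orthogonal complement of u
    set E' : Submodule ℂ E := (ℂ ∙ u)ᗮ with hE'def
    have hperp : ∀ y : E, y ∈ E' → ⟪u, y⟫ = 0 := fun y hy =>
      hy u (Submodule.mem_span_singleton_self u)
    have hrank' : finrank ℂ E' = n := by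
      have h1 := Submodule.finrank_add_finrank_orthogonal (K := (ℂ ∙ u)) (E := E)
      rw [finrank_span_singleton hu0, hrank] at h1
      rw [hE'def]
      omega
    have hTinv : ∀ y : E, y ∈ E' → T y ∈ E' := by
      intro y hy
      intro z hz
      obtain ⟨c, rfl⟩ := Submodule.mem_span_singleton.mp hz
      rw [inner_smul_left]
      have h2 : ⟪u, T y⟫ = 0 := by
        rw [← inner_conj_symm, hsym y u, hTu, inner_smul_left, Complex.conj_ofReal,
          hperp y hy, mul_zero, map_zero]
      rw [h2, mul_zero]
    let T' : E' → E' := fun y => ⟨T y, hTinv _ y.2⟩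
    obtain ⟨v', d', hON', hd'0, hTv'⟩ := ih E' hrank' T'
      (fun a b => Subtype.ext (hadd a b))
      (fun c a => Subtype.ext (hsmul c a))
      (fun a b => by
        show ⟪(T' a : E), (b : E)⟫ = ⟪(T' b : E), (a : E)⟫
        exact hsym a b)
    refine ⟨Fin.cons u (fun i => (v' i : E)), Fin.cons s d', ?_, ?_, ?_⟩
    · rw [orthonormal_iff_ite]
      intro i j
      refine Fin.cases ?_ (fun i => ?_) i <;> refine Fin.cases ?_ (fun j => ?_) j
      · simp [inner_self_eq_norm_sq_to_K, hu]
      · simp only [Fin.cons_zero, Fin.cons_succ]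
        rw [hperp _ (v' j).2, if_neg (Fin.succ_ne_zero j).symm]
      · simp only [Fin.cons_zero, Fin.cons_succ]
        rw [← inner_conj_symm, hperp _ (v' i).2, map_zero, if_neg (Fin.succ_ne_zero i)]
      · simp only [Fin.cons_succ]
        rw [← Submodule.coe_inner, orthonormal_iff_ite.mp hON' i j]
        simp [Fin.succ_inj]
    · intro i
      refine Fin.cases ?_ (fun j => ?_) i
      · simpa using hs0
      · simpa using hd'0 j
    · intro i
      refine Fin.cases ?_ (fun j => ?_) i
      · simpa using hTu
      · simp only [Fin.cons_succ]
        have h := congrArg (Subtype.val) (hTv' j)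
        simpa using h

/-- Takagi factorization: every complex symmetric `M × M` matrix `A` factors as
`A = Q * Σ * Qᵀ` where `Q` is unitary and `Σ` is diagonal with nonnegative real
entries which are the singular values of `A` (i.e. up to a permutation, their squares
are the eigenvalues of `Aᴴ * A`). -/
theorem takagi_factorization (M : ℕ) (A : Matrix (Fin M) (Fin M) ℂ)
    (hsym : Aᵀ = A) :
    ∃ (Q : Matrix (Fin M) (Fin M) ℂ) (d : Fin M → ℝ),
      Qᴴ * Q = 1 ∧ (∀ i, 0 ≤ d i) ∧
      A = Q * Matrix.diagonal (fun i => (d i : ℂ)) * Qᵀ ∧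
      ∃ σ : Equiv.Perm (Fin M),
        ∀ i, (d i) ^ 2 =
          (Matrix.isHermitian_conjTranspose_mul_self A).eigenvalues (σ i) := by
  have hA : ∀ i j, A j i = A i j := fun i j => congrFun (congrFun hsym i) j
  let T : EuclideanSpace ℂ (Fin M) → EuclideanSpace ℂ (Fin M) := fun x => WithLp.toLp 2 (A.mulVec (fun i => starRingEnd ℂ (x i)) : Fin M → ℂ)
  have hTapp : ∀ (x : EuclideanSpace ℂ (Fin M)) (i : Fin M), T x i = ∑ j, A i j * starRingEnd ℂ (x j) := by
    intro x i
    simp [T, Matrix.mulVec, dotProduct]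
  have hadd : ∀ x y : EuclideanSpace ℂ (Fin M), T (x + y) = T x + T y := by
    intro x y
    ext i
    show T (x + y) i = T x i + T y i
    rw [hTapp, hTapp, hTapp, ← Finset.sum_add_distrib]
    refine Finset.sum_congr rfl fun j _ => ?_
    show A i j * starRingEnd ℂ (x j + y j) = _
    rw [map_add]
    ring
  have hsmul : ∀ (c : ℂ) (x : EuclideanSpace ℂ (Fin M)), T (c • x) = (starRingEnd ℂ c) • T x := by
    intro c x
    ext i
    show T (c • x) i = starRingEnd ℂ c * T x i
    rw [hTapp, hTapp, Finset.mul_sum]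
    refine Finset.sum_congr rfl fun j _ => ?_
    show A i j * starRingEnd ℂ (c * x j) = _
    rw [_root_.map_mul]
    ring
  have hsymT : ∀ x y : EuclideanSpace ℂ (Fin M), ⟪T x, y⟫ = ⟪T y, x⟫ := by
    intro x y
    rw [PiLp.inner_apply, PiLp.inner_apply]
    simp only [RCLike.inner_apply']
    calc ∑ i, starRingEnd ℂ (T x i) * y i
        = ∑ i, ∑ j, starRingEnd ℂ (A i j) * x j * y i := by
          refine Finset.sum_congr rfl fun i _ => ?_
          rw [hTapp, _root_.map_sum, Finset.sum_mul]
          refine Finset.sum_congr rfl fun j _ => ?_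
          rw [_root_.map_mul, Complex.conj_conj]
      _ = ∑ j, ∑ i, starRingEnd ℂ (A i j) * x j * y i := Finset.sum_comm
      _ = ∑ i, starRingEnd ℂ (T y i) * x i := by
          refine Finset.sum_congr rfl fun j _ => ?_
          rw [hTapp, _root_.map_sum, Finset.sum_mul]
          refine Finset.sum_congr rfl fun i _ => ?_
          rw [_root_.map_mul, Complex.conj_conj, hA j i]
          ring
  obtain ⟨v, d, hON, hd0, hT⟩ := antilinear_diag M (EuclideanSpace ℂ (Fin M)) finrank_euclideanSpace_fin T hadd hsmul hsymT
  set Q : Matrix (Fin M) (Fin M) ℂ := Matrix.of fun i j => v j i with hQdef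
  have hQ : Qᴴ * Q = 1 := by
    ext i j
    have h := orthonormal_iff_ite.mp hON i j
    simp only [PiLp.inner_apply, RCLike.inner_apply'] at h
    simp only [Matrix.mul_apply, Matrix.conjTranspose_apply, Matrix.one_apply, hQdef,
      Matrix.of_apply, Complex.star_def]
    rw [h]
  have hQQ : Q * Qᴴ = 1 := mul_eq_one_comm.mp hQ
  have h1 : Qᴴᵀ * Qᵀ = 1 := by
    rw [← Matrix.transpose_mul, hQQ, Matrix.transpose_one]
  have hAQ : A * Qᴴᵀ = Q * Matrix.diagonal (fun i => (d i : ℂ)) := by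
    ext i j
    have h : T (v j) i = ((d j : ℂ) • v j) i := by rw [hT j]
    show (A * Qᴴᵀ) i j = (Q * Matrix.diagonal (fun i => (d i : ℂ))) i j
    rw [Matrix.mul_diagonal]
    rw [Matrix.mul_apply]
    have hL : ∑ k, A i k * Qᴴᵀ k j = T (v j) i := by
      rw [hTapp]
      refine Finset.sum_congr rfl fun k _ => ?_
      simp [hQdef, Matrix.conjTranspose_apply, Matrix.transpose_apply]
    rw [hL, h]
    show (d j : ℂ) * v j i = Q i j * (d j : ℂ)
    simp [hQdef]
    ring
  have hfact : A = Q * Matrix.diagonal (fun i => (d i : ℂ)) * Qᵀ := by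
    calc A = A * (Qᴴᵀ * Qᵀ) := by rw [h1, Matrix.mul_one]
      _ = A * Qᴴᵀ * Qᵀ := by rw [Matrix.mul_assoc]
      _ = Q * Matrix.diagonal (fun i => (d i : ℂ)) * Qᵀ := by rw [hAQ]
  refine ⟨Q, d, hQ, hd0, hfact, ?_⟩
  -- eigenvalue part
  set hH := Matrix.isHermitian_conjTranspose_mul_self A with hHdef
  set eig := hH.eigenvalues with heigdef
  have hU := hH.spectral_theorem
  rw [Unitary.conjStarAlgAut_apply] at hU
  set U : Matrix (Fin M) (Fin M) ℂ := (Matrix.IsHermitian.eigenvectorUnitary hH : Matrix (Fin M) (Fin M) ℂ) with hUdef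
  have hUU : U * star U = 1 := (Matrix.mem_unitaryGroup_iff).mp (Matrix.IsHermitian.eigenvectorUnitary hH).2
  have hc1 : (Aᴴ * A).charpoly = ∏ i, (X - C ((eig i : ℝ) : ℂ)) := by
    calc (Aᴴ * A).charpoly
        = (U * Matrix.diagonal (RCLike.ofReal ∘ eig) * star U).charpoly := by rw [← hU]
      _ = (Matrix.diagonal (RCLike.ofReal ∘ eig)).charpoly :=
          charpoly_similar U (star U) _ hUU
      _ = ∏ i, (X - C ((eig i : ℝ) : ℂ)) := by rw [_root_.charpoly_diagonal]; rfl
  have hAH : Aᴴ = Qᴴᵀ * Matrix.diagonal (fun i => (d i : ℂ)) * Qᴴ := by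
    rw [hfact, Matrix.conjTranspose_mul, Matrix.conjTranspose_mul]
    have e1 : (Qᵀ)ᴴ = Qᴴᵀ := by
      ext i j
      simp [Matrix.conjTranspose_apply, Matrix.transpose_apply]
    have e2 : (Matrix.diagonal (fun i => (d i : ℂ)))ᴴ = Matrix.diagonal (fun i => (d i : ℂ)) := by
      rw [Matrix.diagonal_conjTranspose]
      refine congrArg Matrix.diagonal (funext fun i => ?_)
      show star ((d i : ℝ) : ℂ) = ((d i : ℝ) : ℂ)
      rw [Complex.star_def, Complex.conj_ofReal]
    rw [e1, e2, Matrix.mul_assoc]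
  have hH2 : Aᴴ * A = Qᴴᵀ * Matrix.diagonal (fun i => (d i : ℂ) * (d i : ℂ)) * Qᵀ := by
    calc Aᴴ * A = (Qᴴᵀ * Matrix.diagonal (fun i => (d i : ℂ)) * Qᴴ)
          * (Q * Matrix.diagonal (fun i => (d i : ℂ)) * Qᵀ) := by rw [← hAH, ← hfact]
      _ = Qᴴᵀ * Matrix.diagonal (fun i => (d i : ℂ)) * (Qᴴ * Q)
          * Matrix.diagonal (fun i => (d i : ℂ)) * Qᵀ := by
            simp only [Matrix.mul_assoc]
      _ = Qᴴᵀ * (Matrix.diagonal (fun i => (d i : ℂ))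
          * Matrix.diagonal (fun i => (d i : ℂ))) * Qᵀ := by
            rw [hQ, Matrix.mul_one]
            simp only [Matrix.mul_assoc]
      _ = Qᴴᵀ * Matrix.diagonal (fun i => (d i : ℂ) * (d i : ℂ)) * Qᵀ := by
            rw [Matrix.diagonal_mul_diagonal]
  have hc2 : (Aᴴ * A).charpoly = ∏ i, (X - C ((d i ^ 2 : ℝ) : ℂ)) := by
    rw [hH2, charpoly_similar _ _ _ h1, _root_.charpoly_diagonal]
    refine Finset.prod_congr rfl fun i _ => ?_
    congr 1
    push_cast
    ring
  have hprod : ∏ i, (X - C ((d i ^ 2 : ℝ) : ℂ)) = ∏ i, (X - C ((eig i : ℝ) : ℂ)) := by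
    rw [← hc1, ← hc2]
  have h3 : ∀ f : Fin M → ℂ, (∏ i, (X - C (f i))).roots = Multiset.map f Finset.univ.val := by
    intro f
    rw [Finset.prod_eq_multiset_prod]
    calc (Multiset.map (fun i => X - C (f i)) Finset.univ.val).prod.roots
        = ((Multiset.map f Finset.univ.val).map (fun a => X - C a)).prod.roots := by
          rw [Multiset.map_map]
          rfl
      _ = Multiset.map f Finset.univ.val := roots_multiset_prod_X_sub_C _
  have hroots : Multiset.map (fun i => ((d i ^ 2 : ℝ) : ℂ)) Finset.univ.val
      = Multiset.map (fun i => ((eig i : ℝ) : ℂ)) Finset.univ.val := by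
    have h4 := congrArg Polynomial.roots hprod
    rw [h3, h3] at h4
    exact h4
  have hreal : Multiset.map (fun i => d i ^ 2) Finset.univ.val
      = Multiset.map eig Finset.univ.val := by
    apply Multiset.map_injective (f := (Complex.ofReal)) Complex.ofReal_injective
    rw [Multiset.map_map, Multiset.map_map]
    exact hroots
  obtain ⟨σ, hσ⟩ := exists_comp_perm (fun i => d i ^ 2) eig hreal
  exact ⟨σ, hσ⟩
end

section
/- If A ∈ ℂ^{M×M} is symmetric with Takagi factorization A = Q Λ Qᵀ (Q unitary, Λ diagonal with nonnegative entries), then Θ := Q Qᵀ is symmetric and unitary, and among all symmetric unitary matrices it is a nearest matrix to A in Frobenius norm (i.e., Θ minimizes ‖A − U‖_F over symmetric unitary U). -/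
open Matrix

/-- Squared Frobenius norm of a complex matrix. -/
noncomputable def frobSq {n : Type*} [Fintype n] (X : Matrix n n ℂ) : ℝ :=
  ((Xᴴ * X).trace).re

namespace TakagiAux

variable {M : ℕ}

lemma ct_t (Q : Matrix (Fin M) (Fin M) ℂ) : (Qᵀ)ᴴ = (Qᴴ)ᵀ := by
  ext i j
  simp [Matrix.conjTranspose_apply, Matrix.transpose_apply]

lemma diag_re_le_one (V : Matrix (Fin M) (Fin M) ℂ) (hV : Vᴴ * V = 1) (i : Fin M) :
    (V i i).re ≤ 1 := by
  have h1 : (∑ j, (starRingEnd ℂ) (V j i) * V j i) = 1 := by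
    have h : ((Vᴴ * V) i i) = ∑ j, (starRingEnd ℂ) (V j i) * V j i := by
      simp [Matrix.mul_apply, Matrix.conjTranspose_apply]
    rw [← h, hV]; simp [Matrix.one_apply]
  have h2 : ∑ j, Complex.normSq (V j i) = 1 := by
    have := congrArg Complex.re h1
    simpa [Complex.mul_re, Complex.normSq_apply] using this
  have h3 : Complex.normSq (V i i) ≤ 1 := by
    rw [← h2]
    exact Finset.single_le_sum (f := fun j => Complex.normSq (V j i))
      (fun j _ => Complex.normSq_nonneg _) (Finset.mem_univ i)
  have h4 := Complex.normSq_apply (V i i)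
  nlinarith [sq_nonneg ((V i i).re - 1), sq_nonneg ((V i i).im)]

lemma frobSq_sub (A W : Matrix (Fin M) (Fin M) ℂ) (hW : Wᴴ * W = 1) :
    frobSq (A - W) = frobSq A + M - 2 * ((Wᴴ * A).trace).re := by
  unfold frobSq
  have h : (Aᴴ * W).trace = star ((Wᴴ * A).trace) := by
    rw [← Matrix.trace_conjTranspose, Matrix.conjTranspose_mul,
      Matrix.conjTranspose_conjTranspose]
  rw [conjTranspose_sub, sub_mul, mul_sub, mul_sub, hW]
  simp only [Matrix.trace_sub, Matrix.trace_one, Complex.sub_re, h, Complex.star_def,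
    Complex.conj_re, Complex.natCast_re]
  simp [Fintype.card_fin]
  ring

lemma re_trace_bound (Q : Matrix (Fin M) (Fin M) ℂ) (d : Fin M → ℝ)
    (hQ : Qᴴ * Q = 1) (hd : ∀ i, 0 ≤ d i) (W : Matrix (Fin M) (Fin M) ℂ)
    (hW : Wᴴ * W = 1) :
    ((Wᴴ * (Q * Matrix.diagonal (fun i => (d i : ℂ)) * Qᵀ)).trace).re ≤ ∑ i, d i := by
  have hQQ : Q * Qᴴ = 1 := mul_eq_one_comm.mp hQ
  have hWW : W * Wᴴ = 1 := mul_eq_one_comm.mp hW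
  set V := Qᵀ * Wᴴ * Q with hVdef
  have hVu : Vᴴ * V = 1 := by
    have hQt : (Qᴴ)ᵀ * Qᵀ = 1 := by
      rw [← Matrix.transpose_mul, hQQ, Matrix.transpose_one]
    calc Vᴴ * V = Qᴴ * (W * ((Qᴴ)ᵀ * Qᵀ) * Wᴴ) * Q := by
          simp only [hVdef, Matrix.conjTranspose_mul, ct_t,
            Matrix.conjTranspose_conjTranspose]
          noncomm_ring
      _ = 1 := by rw [hQt, mul_one, hWW, mul_one, hQ]
  have htr : (Wᴴ * (Q * Matrix.diagonal (fun i => (d i : ℂ)) * Qᵀ)).trace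
      = (V * Matrix.diagonal (fun i => (d i : ℂ))).trace := by
    rw [show Wᴴ * (Q * Matrix.diagonal (fun i => (d i : ℂ)) * Qᵀ)
        = (Wᴴ * Q * Matrix.diagonal (fun i => (d i : ℂ))) * Qᵀ by noncomm_ring,
      Matrix.trace_mul_comm]
    simp only [hVdef]
    noncomm_ring
  rw [htr]
  have hsum : (V * Matrix.diagonal (fun i => (d i : ℂ))).trace = ∑ i, V i i * (d i : ℂ) := by
    simp [Matrix.trace, Matrix.diag, Matrix.mul_diagonal]
  rw [hsum, Complex.re_sum]
  apply Finset.sum_le_sum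
  intro i _
  have hmr : (V i i * (d i : ℂ)).re = (V i i).re * d i := by
    simp [Complex.mul_re]
  rw [hmr]
  calc (V i i).re * d i ≤ 1 * d i :=
        mul_le_mul_of_nonneg_right (diag_re_le_one V hVu i) (hd i)
    _ = d i := one_mul _

end TakagiAux

/-- If `A` is symmetric with Takagi factorization `A = Q Λ Qᵀ` (`Q` unitary, `Λ`
diagonal with nonnegative entries), then `Θ = Q Qᵀ` is symmetric and unitary, and it
minimizes `‖A − U‖_F` over all symmetric unitary matrices `U`. -/
theorem takagi_nearest_symmetric_unitary (M : ℕ)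
    (A Q : Matrix (Fin M) (Fin M) ℂ) (d : Fin M → ℝ)
    (hsym : Aᵀ = A) (hQ : Qᴴ * Q = 1) (hd : ∀ i, 0 ≤ d i)
    (hfact : A = Q * Matrix.diagonal (fun i => (d i : ℂ)) * Qᵀ)
    (Θ : Matrix (Fin M) (Fin M) ℂ) (hΘ : Θ = Q * Qᵀ) :
    Θᵀ = Θ ∧ Θᴴ * Θ = 1 ∧
    ∀ U : Matrix (Fin M) (Fin M) ℂ, Uᵀ = U → Uᴴ * U = 1 →
      frobSq (A - Θ) ≤ frobSq (A - U) := by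
  have hQQ : Q * Qᴴ = 1 := mul_eq_one_comm.mp hQ
  have hΘsym : Θᵀ = Θ := by
    rw [hΘ, Matrix.transpose_mul, Matrix.transpose_transpose]
  have hΘu : Θᴴ * Θ = 1 := by
    have hQt : (Qᴴ)ᵀ * Qᵀ = 1 := by
      rw [← Matrix.transpose_mul, hQQ, Matrix.transpose_one]
    rw [hΘ, Matrix.conjTranspose_mul, TakagiAux.ct_t]
    calc (Qᴴ)ᵀ * Qᴴ * (Q * Qᵀ) = (Qᴴ)ᵀ * (Qᴴ * Q) * Qᵀ := by noncomm_ring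
      _ = 1 := by rw [hQ, mul_one, hQt]
  refine ⟨hΘsym, hΘu, ?_⟩
  intro U hUsym hU
  have hΘtr : ((Θᴴ * A).trace).re = ∑ i, d i := by
    have hQt : Qᵀ * (Qᴴ)ᵀ = 1 := by
      rw [← Matrix.transpose_mul, hQ, Matrix.transpose_one]
    have h1 : Θᴴ * A = (Qᴴ)ᵀ * Matrix.diagonal (fun i => (d i : ℂ)) * Qᵀ := by
      rw [hΘ, hfact, Matrix.conjTranspose_mul, TakagiAux.ct_t]
      calc (Qᴴ)ᵀ * Qᴴ * (Q * Matrix.diagonal (fun i => (d i : ℂ)) * Qᵀ)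
          = (Qᴴ)ᵀ * (Qᴴ * Q) * Matrix.diagonal (fun i => (d i : ℂ)) * Qᵀ := by noncomm_ring
        _ = (Qᴴ)ᵀ * Matrix.diagonal (fun i => (d i : ℂ)) * Qᵀ := by
            rw [hQ, mul_one]
    have h2 : (Θᴴ * A).trace = (Matrix.diagonal (fun i => (d i : ℂ))).trace := by
      rw [h1, Matrix.trace_mul_comm]
      rw [show Qᵀ * ((Qᴴ)ᵀ * Matrix.diagonal (fun i => (d i : ℂ)))
          = (Qᵀ * (Qᴴ)ᵀ) * Matrix.diagonal (fun i => (d i : ℂ)) by noncomm_ring,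
        hQt, one_mul]
    rw [h2, Matrix.trace_diagonal, Complex.re_sum]
    simp
  have hUtr : ((Uᴴ * A).trace).re ≤ ∑ i, d i := by
    rw [hfact]
    exact TakagiAux.re_trace_bound Q d hQ hd U hU
  rw [TakagiAux.frobSq_sub A Θ hΘu, TakagiAux.frobSq_sub A U hU, hΘtr]
  linarith
end

section
/- Logarithmic-determinant lower bound (Lemma 3 of the paper): for arbitrary N×N complex matrices Λ, Λ̄ and N×N positive definite Hermitian matrices Υ, Ῡ, one has ln det(I + Υ⁻¹ΛΛᴴ) ≥ ln det(I + Ῡ⁻¹Λ̄Λ̄ᴴ) − tr(Ῡ⁻¹Λ̄Λ̄ᴴ) + 2Re tr(Ῡ⁻¹Λ̄Λᴴ) − tr((Ῡ⁻¹ − (Λ̄Λ̄ᴴ + Ῡ)⁻¹)ᴴ (ΛΛᴴ + Υ)). -/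
open Matrix ComplexOrder
open scoped MatrixOrder

variable {N : ℕ}

lemma my_trace_eq_sum {A : Matrix (Fin N) (Fin N) ℂ} (hA : A.IsHermitian) :
    A.trace = ((∑ i, hA.eigenvalues i : ℝ) : ℂ) := by
  conv_lhs => rw [hA.spectral_theorem]
  rw [Unitary.conjStarAlgAut_apply, Matrix.trace_mul_cycle, Unitary.coe_star_mul_self,
    one_mul, Matrix.trace_diagonal]
  push_cast
  rfl

lemma my_psd_trace_re_nonneg {A : Matrix (Fin N) (Fin N) ℂ} (hA : A.PosSemidef) :
    0 ≤ A.trace.re := by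
  rw [my_trace_eq_sum hA.1, Complex.ofReal_re]
  exact Finset.sum_nonneg fun i _ => hA.eigenvalues_nonneg i

lemma my_psd_mul_trace_re_nonneg {A B : Matrix (Fin N) (Fin N) ℂ}
    (hA : A.PosSemidef) (hB : B.PosSemidef) : 0 ≤ (A * B).trace.re := by
  have h1 : A * B = A * CFC.sqrt B * CFC.sqrt B := by rw [Matrix.mul_assoc, CFC.sqrt_mul_sqrt_self B hB.nonneg]
  rw [h1, Matrix.trace_mul_cycle]
  refine my_psd_trace_re_nonneg ?_
  have := hA.conjTranspose_mul_mul_same (CFC.sqrt B)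
  rwa [(Matrix.nonneg_iff_posSemidef.mp (CFC.sqrt_nonneg B)).1] at this

lemma my_logdet_le {H : Matrix (Fin N) (Fin N) ℂ} (hH : H.PosDef) :
    Real.log H.det.re ≤ H.trace.re - N := by
  have hd : H.det = ((∏ i, hH.1.eigenvalues i : ℝ) : ℂ) := by
    rw [hH.1.det_eq_prod_eigenvalues]; push_cast; rfl
  rw [hd, Complex.ofReal_re, my_trace_eq_sum hH.1, Complex.ofReal_re,
    Real.log_prod (fun i _ => (hH.eigenvalues_pos i).ne')]
  calc ∑ i, Real.log (hH.1.eigenvalues i)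
      ≤ ∑ i, (hH.1.eigenvalues i - 1) :=
        Finset.sum_le_sum fun i _ => Real.log_le_sub_one_of_pos (hH.eigenvalues_pos i)
    _ = (∑ i, hH.1.eigenvalues i) - N := by
        rw [Finset.sum_sub_distrib]; simp

lemma my_posdef_conj {A S : Matrix (Fin N) (Fin N) ℂ} (hA : A.PosDef) (hS : IsUnit S) :
    (Sᴴ * A * S).PosDef := by
  refine Matrix.PosDef.of_dotProduct_mulVec_pos (Matrix.isHermitian_conjTranspose_mul_mul S hA.1) fun x hx => ?_
  have hSx : S *ᵥ x ≠ 0 :=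
    ((Matrix.mulVec_injective_iff_isUnit.mpr hS).ne_iff' (Matrix.mulVec_zero S)).2 hx
  simpa only [star_mulVec, dotProduct_mulVec, vecMul_vecMul] using hA.dotProduct_mulVec_pos hSx

variable {N : ℕ}

/-- Log-det lower bound (Lemma 3): for arbitrary `N×N` complex matrices `Λ, Λ̄` and
Hermitian positive definite `Υ, Ῡ`,
`ln det(I + Υ⁻¹ Λ Λᴴ) ≥ ln det(I + Ῡ⁻¹ Λ̄ Λ̄ᴴ) − tr(Ῡ⁻¹ Λ̄ Λ̄ᴴ)
 + 2 Re tr(Ῡ⁻¹ Λ̄ Λᴴ) − tr((Ῡ⁻¹ − (Λ̄ Λ̄ᴴ + Ῡ)⁻¹)ᴴ (Λ Λᴴ + Υ))`. -/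
theorem logdet_lower_bound (N : ℕ)
    (L Lb U Ub : Matrix (Fin N) (Fin N) ℂ)
    (hU : U.PosDef) (hUb : Ub.PosDef) :
    Real.log ((1 + U⁻¹ * (L * Lᴴ)).det.re) ≥
      Real.log ((1 + Ub⁻¹ * (Lb * Lbᴴ)).det.re)
      - ((Ub⁻¹ * (Lb * Lbᴴ)).trace).re
      + 2 * ((Ub⁻¹ * (Lb * Lᴴ)).trace).re
      - (((Ub⁻¹ - (Lb * Lbᴴ + Ub)⁻¹)ᴴ * (L * Lᴴ + U)).trace).re := by
  classical
  set M : Matrix (Fin N) (Fin N) ℂ := L * Lᴴ + U with hMdef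
  set Mb : Matrix (Fin N) (Fin N) ℂ := Lb * Lbᴴ + Ub with hMbdef
  have hM : M.PosDef := Matrix.PosDef.posSemidef_add (Matrix.posSemidef_self_mul_conjTranspose L) hU
  have hMb : Mb.PosDef := Matrix.PosDef.posSemidef_add (Matrix.posSemidef_self_mul_conjTranspose Lb) hUb
  -- cancellation facts
  have hMM : M * M⁻¹ = 1 := Matrix.mul_nonsing_inv M (isUnit_iff_ne_zero.mpr hM.det_pos.ne')
  have hM'M : M⁻¹ * M = 1 := Matrix.nonsing_inv_mul M (isUnit_iff_ne_zero.mpr hM.det_pos.ne')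
  have hMbMb : Mb * Mb⁻¹ = 1 := Matrix.mul_nonsing_inv Mb (isUnit_iff_ne_zero.mpr hMb.det_pos.ne')
  have hMb'Mb : Mb⁻¹ * Mb = 1 := Matrix.nonsing_inv_mul Mb (isUnit_iff_ne_zero.mpr hMb.det_pos.ne')
  have hUU : U * U⁻¹ = 1 := Matrix.mul_nonsing_inv U (isUnit_iff_ne_zero.mpr hU.det_pos.ne')
  have hU'U : U⁻¹ * U = 1 := Matrix.nonsing_inv_mul U (isUnit_iff_ne_zero.mpr hU.det_pos.ne')
  have hUbUb : Ub * Ub⁻¹ = 1 := Matrix.mul_nonsing_inv Ub (isUnit_iff_ne_zero.mpr hUb.det_pos.ne')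
  have hUb'Ub : Ub⁻¹ * Ub = 1 := Matrix.nonsing_inv_mul Ub (isUnit_iff_ne_zero.mpr hUb.det_pos.ne')
  -- Hermitian inverses
  have hMinvH : (M⁻¹)ᴴ = M⁻¹ := hM.1.inv
  have hMbinvH : (Mb⁻¹)ᴴ = Mb⁻¹ := hMb.1.inv
  have hUinvH : (U⁻¹)ᴴ = U⁻¹ := hU.1.inv
  have hUbinvH : (Ub⁻¹)ᴴ = Ub⁻¹ := hUb.1.inv
  set K : Matrix (Fin N) (Fin N) ℂ := 1 + Lbᴴ * Ub⁻¹ * Lb with hKdef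
  set KL : Matrix (Fin N) (Fin N) ℂ := 1 + Lᴴ * U⁻¹ * L with hKLdef
  have hKpd : K.PosDef :=
    Matrix.PosDef.add_posSemidef Matrix.PosDef.one (hUb.inv.posSemidef.conjTranspose_mul_mul_same Lb)
  have hKLpd : KL.PosDef :=
    Matrix.PosDef.add_posSemidef Matrix.PosDef.one (hU.inv.posSemidef.conjTranspose_mul_mul_same L)
  have hKH : Kᴴ = K := hKpd.1
  -- det rewrites for goal
  have hdetL : (1 + U⁻¹ * (L * Lᴴ)).det = KL.det := by
    rw [show U⁻¹ * (L * Lᴴ) = (U⁻¹ * L) * Lᴴ from (Matrix.mul_assoc _ _ _).symm,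
      Matrix.det_one_add_mul_comm, hKLdef, Matrix.mul_assoc]
  have hdetR : (1 + Ub⁻¹ * (Lb * Lbᴴ)).det = K.det := by
    rw [show Ub⁻¹ * (Lb * Lbᴴ) = (Ub⁻¹ * Lb) * Lbᴴ from (Matrix.mul_assoc _ _ _).symm,
      Matrix.det_one_add_mul_comm, hKdef, Matrix.mul_assoc]
  -- dets are positive reals
  obtain ⟨hKre, hKim⟩ := Complex.lt_def.mp hKpd.det_pos
  obtain ⟨hKLre, hKLim⟩ := Complex.lt_def.mp hKLpd.det_pos
  simp only [Complex.zero_re, Complex.zero_im] at hKre hKim hKLre hKLim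
  have hKdetC : K.det = ((K.det.re : ℝ) : ℂ) := Complex.ext rfl (by simp [← hKim])
  have hKLdetC : KL.det = ((KL.det.re : ℝ) : ℂ) := Complex.ext rfl (by simp [← hKLim])
  -- key inverse identities
  have h1 : U⁻¹ * (L * Lᴴ) * M⁻¹ = U⁻¹ - M⁻¹ := by
    rw [show L * Lᴴ = M - U from by rw [hMdef, add_sub_cancel_right],
      Matrix.mul_sub, Matrix.sub_mul, Matrix.mul_assoc U⁻¹ M M⁻¹, hMM, mul_one, hU'U, one_mul]
  have h1b : Ub⁻¹ * (Lb * Lbᴴ) * Mb⁻¹ = Ub⁻¹ - Mb⁻¹ := by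
    rw [show Lb * Lbᴴ = Mb - Ub from by rw [hMbdef, add_sub_cancel_right],
      Matrix.mul_sub, Matrix.sub_mul, Matrix.mul_assoc Ub⁻¹ Mb Mb⁻¹, hMbMb, mul_one, hUb'Ub, one_mul]
  have h3 : Mb⁻¹ * (Lb * Lbᴴ) * Ub⁻¹ = Ub⁻¹ - Mb⁻¹ := by
    rw [show Lb * Lbᴴ = Mb - Ub from by rw [hMbdef, add_sub_cancel_right],
      Matrix.mul_sub, Matrix.sub_mul, hMb'Mb, one_mul, Matrix.mul_assoc Mb⁻¹ Ub Ub⁻¹, hUbUb, mul_one]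
  set Emin : Matrix (Fin N) (Fin N) ℂ := 1 - Lᴴ * M⁻¹ * L with hEmindef
  have hI1 : KL * Emin = 1 := by
    have e : KL * Emin = 1 - Lᴴ * M⁻¹ * L + Lᴴ * U⁻¹ * L - Lᴴ * (U⁻¹ * (L * Lᴴ) * M⁻¹) * L := by
      rw [hKLdef, hEmindef]; noncomm_ring
    rw [e, h1]; noncomm_ring
  have hEminPD : Emin.PosDef := by
    rw [← Matrix.inv_eq_right_inv hI1]; exact hKLpd.inv
  have hdetKLEmin : KL.det * Emin.det = 1 := by rw [← Matrix.det_mul, hI1, Matrix.det_one]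
  have hJ1 : K * (Lbᴴ * Mb⁻¹) = Lbᴴ * Ub⁻¹ := by
    have e : K * (Lbᴴ * Mb⁻¹) = Lbᴴ * Mb⁻¹ + Lbᴴ * (Ub⁻¹ * (Lb * Lbᴴ) * Mb⁻¹) := by
      rw [hKdef]; noncomm_ring
    rw [e, h1b]; noncomm_ring
  have hJ2 : Mb⁻¹ * (Lb * K) = Ub⁻¹ * Lb := by
    have := congrArg conjTranspose hJ1
    simpa [Matrix.conjTranspose_mul, hMbinvH, hUbinvH, hKH, Matrix.mul_assoc] using this
  set D : Matrix (Fin N) (Fin N) ℂ := Lbᴴ * Mb⁻¹ - Lᴴ * M⁻¹ with hDdef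
  set Eg : Matrix (Fin N) (Fin N) ℂ :=
    1 - Lbᴴ * Mb⁻¹ * L - Lᴴ * Mb⁻¹ * Lb + Lbᴴ * (Mb⁻¹ * M * Mb⁻¹) * Lb with hEgdef
  have hDh : Dᴴ = Mb⁻¹ * Lb - M⁻¹ * L := by
    rw [hDdef]; simp [Matrix.conjTranspose_mul, hMbinvH, hMinvH]
  have hEg : Emin + D * M * Dᴴ = Eg := by
    rw [hDh, hEmindef, hDdef, hEgdef]
    have e : (1 - Lᴴ * M⁻¹ * L) + (Lbᴴ * Mb⁻¹ - Lᴴ * M⁻¹) * M * (Mb⁻¹ * Lb - M⁻¹ * L)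
        = 1 - Lᴴ * M⁻¹ * L + Lbᴴ * (Mb⁻¹ * M * Mb⁻¹) * Lb - Lbᴴ * (Mb⁻¹ * M * M⁻¹) * L
          - Lᴴ * (M⁻¹ * M * Mb⁻¹) * Lb + Lᴴ * (M⁻¹ * M * M⁻¹) * L := by
      noncomm_ring
    have c1 : Mb⁻¹ * M * M⁻¹ = Mb⁻¹ := by rw [Matrix.mul_assoc, hMM, mul_one]
    have c2 : M⁻¹ * M * Mb⁻¹ = Mb⁻¹ := by rw [hM'M, one_mul]
    have c3 : M⁻¹ * M * M⁻¹ = M⁻¹ := by rw [hM'M, one_mul]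
    rw [e, c1, c2, c3]; noncomm_ring
  have hDMDpsd : (D * M * Dᴴ).PosSemidef := hM.posSemidef.mul_mul_conjTranspose_same D
  -- sqrt of K
  set S : Matrix (Fin N) (Fin N) ℂ := CFC.sqrt K with hSdef
  have hSS : S * S = K := CFC.sqrt_mul_sqrt_self K hKpd.posSemidef.nonneg
  have hSH : Sᴴ = S := (Matrix.nonneg_iff_posSemidef.mp (CFC.sqrt_nonneg K)).1
  have hSdet : S.det * S.det = K.det := by rw [← Matrix.det_mul, hSS]
  have hSunit : IsUnit S := by
    refine (Matrix.isUnit_iff_isUnit_det S).mpr (isUnit_iff_ne_zero.mpr fun h => ?_)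
    rw [h, zero_mul] at hSdet
    exact hKpd.det_pos.ne' hSdet.symm
  have hHpd : (S * Emin * S).PosDef := by
    have := my_posdef_conj hEminPD hSunit; rwa [hSH] at this
  have key1 : Real.log ((S * Emin * S).det.re) ≤ ((S * Emin * S).trace.re) - N := my_logdet_le hHpd
  have hHdet : (S * Emin * S).det = K.det * Emin.det := by
    rw [Matrix.det_mul, Matrix.det_mul, ← hSdet]; ring
  have hHtr : (S * Emin * S).trace = (K * Emin).trace := by
    rw [Matrix.trace_mul_cycle, hSS]
  -- Emin.det and H.det.re
  have hEmindet : Emin.det = (KL.det)⁻¹ := (inv_eq_of_mul_eq_one_right hdetKLEmin).symm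
  have hHdetre : (S * Emin * S).det.re = K.det.re / KL.det.re := by
    have e : (S * Emin * S).det = ((K.det.re / KL.det.re : ℝ) : ℂ) := by
      rw [hHdet, hEmindet, Complex.ofReal_div]
      conv_lhs => rw [hKdetC, hKLdetC]
      rw [div_eq_mul_inv]
    rw [e, Complex.ofReal_re]
  have hlog : Real.log ((S * Emin * S).det.re) = Real.log K.det.re - Real.log KL.det.re := by
    rw [hHdetre, Real.log_div hKre.ne' hKLre.ne']
  -- trace inequality
  have key2 : (K * Emin).trace.re ≤ (K * Eg).trace.re := by
    have e : K * Eg = K * Emin + K * (D * M * Dᴴ) := by rw [← hEg, Matrix.mul_add]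
    rw [e, Matrix.trace_add, Complex.add_re]
    have := my_psd_mul_trace_re_nonneg hKpd.posSemidef hDMDpsd
    linarith
  -- trace identity
  have key3 : (K * Eg).trace = (N : ℂ) + (Ub⁻¹ * (Lb * Lbᴴ)).trace - (Ub⁻¹ * (L * Lbᴴ)).trace
      - (Ub⁻¹ * (Lb * Lᴴ)).trace + ((Ub⁻¹ - Mb⁻¹) * M).trace := by
    have e4 : K * Eg = K - (K * (Lbᴴ * Mb⁻¹)) * L - K * (Lᴴ * (Mb⁻¹ * Lb))
        + ((K * (Lbᴴ * Mb⁻¹)) * M) * (Mb⁻¹ * Lb) := by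
      rw [hEgdef]; noncomm_ring
    rw [e4, hJ1, Matrix.trace_add, Matrix.trace_sub, Matrix.trace_sub]
    have tK : K.trace = (N : ℂ) + (Ub⁻¹ * (Lb * Lbᴴ)).trace := by
      rw [hKdef, Matrix.trace_add, Matrix.trace_one, Fintype.card_fin,
        (Matrix.trace_mul_cycle Lbᴴ Ub⁻¹ Lb).trans (Matrix.trace_mul_comm (Lb * Lbᴴ) Ub⁻¹)]
    have tT2 : ((Lbᴴ * Ub⁻¹) * L).trace = (Ub⁻¹ * (L * Lbᴴ)).trace := by
      exact (Matrix.trace_mul_cycle Lbᴴ Ub⁻¹ L).trans (Matrix.trace_mul_comm (L * Lbᴴ) Ub⁻¹)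
    have tT3 : (K * (Lᴴ * (Mb⁻¹ * Lb))).trace = (Ub⁻¹ * (Lb * Lᴴ)).trace := by
      rw [show K * (Lᴴ * (Mb⁻¹ * Lb)) = (K * Lᴴ) * (Mb⁻¹ * Lb) from by noncomm_ring,
        Matrix.trace_mul_comm (K * Lᴴ) (Mb⁻¹ * Lb),
        show (Mb⁻¹ * Lb) * (K * Lᴴ) = (Mb⁻¹ * (Lb * K)) * Lᴴ from by noncomm_ring,
        hJ2,
        show (Ub⁻¹ * Lb) * Lᴴ = Ub⁻¹ * (Lb * Lᴴ) from Matrix.mul_assoc _ _ _]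
    have tT4 : (((Lbᴴ * Ub⁻¹) * M) * (Mb⁻¹ * Lb)).trace = ((Ub⁻¹ - Mb⁻¹) * M).trace := by
      rw [show ((Lbᴴ * Ub⁻¹) * M) * (Mb⁻¹ * Lb) = Lbᴴ * ((Ub⁻¹ * M) * (Mb⁻¹ * Lb)) from by
          noncomm_ring,
        Matrix.trace_mul_comm Lbᴴ ((Ub⁻¹ * M) * (Mb⁻¹ * Lb)),
        show ((Ub⁻¹ * M) * (Mb⁻¹ * Lb)) * Lbᴴ = (Ub⁻¹ * M) * (Mb⁻¹ * (Lb * Lbᴴ)) from by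
          noncomm_ring,
        Matrix.trace_mul_comm (Ub⁻¹ * M) (Mb⁻¹ * (Lb * Lbᴴ)),
        show (Mb⁻¹ * (Lb * Lbᴴ)) * (Ub⁻¹ * M) = (Mb⁻¹ * (Lb * Lbᴴ) * Ub⁻¹) * M from by
          noncomm_ring,
        h3]
    rw [tK, tT2, tT3, tT4]
  -- conjugate trace real parts agree
  have hconj : (Ub⁻¹ * (L * Lbᴴ)).trace.re = (Ub⁻¹ * (Lb * Lᴴ)).trace.re := by
    have h := Matrix.trace_conjTranspose (Ub⁻¹ * (Lb * Lᴴ))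
    rw [show (Ub⁻¹ * (Lb * Lᴴ))ᴴ = (L * Lbᴴ) * Ub⁻¹ from by
        simp [Matrix.conjTranspose_mul, hUbinvH, Matrix.mul_assoc],
      Matrix.trace_mul_comm (L * Lbᴴ) Ub⁻¹] at h
    rw [h, Complex.star_def, Complex.conj_re]
  -- real part of key3
  have key3re : (K * Eg).trace.re = (N : ℝ) + (Ub⁻¹ * (Lb * Lbᴴ)).trace.re
      - (Ub⁻¹ * (L * Lbᴴ)).trace.re - (Ub⁻¹ * (Lb * Lᴴ)).trace.re
      + ((Ub⁻¹ - Mb⁻¹) * M).trace.re := by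
    rw [key3]; simp
  -- Hermitian of the difference
  have hHermSub : (Ub⁻¹ - Mb⁻¹)ᴴ = Ub⁻¹ - Mb⁻¹ := by
    rw [Matrix.conjTranspose_sub, hUbinvH, hMbinvH]
  rw [ge_iff_le, hdetL, hdetR, hHermSub]
  rw [hlog, hHtr] at key1
  linarith
end
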